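/- arXiv:2202.05511 — 4 statements merged into one kernel-verified Lean document; each statement's English description precedes it below -/
import Mathlib

section
/- Let Δ = Δ1 ∪_{Σ1,Σ2} Δ2 be a consistent belief base with syntax splitting, let OP(Δ) = (Δ^0,…,Δ^k) be the inclusion-maximal tolerance partition of Δ, and let OP(Δ_i) = (Δ_i^0,…,Δ_i^{l_i}) be the inclusion-maximal tolerance partition of Δ_i for i = 1,2. Then for i = 1,2 and every j = 0,…,l_i we have Δ_i^j = Δ^j ∩ Δ_i, and in particular Δ_i^j ⊆ Δ^j. -/
open scoped Classical

namespace SysW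

/-- Propositional formulas over a signature (set of atoms) `V`. -/
inductive PForm (V : Type) : Type
  | var (v : V)
  | tru
  | fls
  | neg (φ : PForm V)
  | conj (φ ψ : PForm V)
  | disj (φ ψ : PForm V)

/-- Evaluation of a formula in a world `ω : V → Bool`. -/
def PForm.eval {V : Type} (ω : V → Bool) : PForm V → Bool
  | var v => ω v
  | tru => true
  | fls => false
  | neg φ => !(PForm.eval ω φ)
  | conj φ ψ => PForm.eval ω φ && PForm.eval ω ψ
  | disj φ ψ => PForm.eval ω φ || PForm.eval ω ψ

/-- The atoms occurring in a formula. -/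
def PForm.vars {V : Type} : PForm V → Set V
  | var v => {v}
  | tru => ∅
  | fls => ∅
  | neg φ => PForm.vars φ
  | conj φ ψ => PForm.vars φ ∪ PForm.vars ψ
  | disj φ ψ => PForm.vars φ ∪ PForm.vars ψ

/-- A conditional (B|A): "if `ante` then usually `cons`". -/
structure CondRule (V : Type) : Type where
  cons : PForm V
  ante : PForm V

/-- The atoms occurring in a conditional. -/
def condVars {V : Type} (r : CondRule V) : Set V := r.ante.vars ∪ r.cons.vars

/-- `ω` verifies (B|A) iff `ω ⊨ A ∧ B`. -/
def verifies {V : Type} (ω : V → Bool) (r : CondRule V) : Prop :=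
  r.ante.eval ω = true ∧ r.cons.eval ω = true

/-- `ω` falsifies (B|A) iff `ω ⊨ A ∧ ¬B`. -/
def falsifies {V : Type} (ω : V → Bool) (r : CondRule V) : Prop :=
  r.ante.eval ω = true ∧ r.cons.eval ω = false

/-- A conditional `r` is tolerated by a set of conditionals `S` if some world
verifies `r` and falsifies no conditional of `S`. -/
def Tolerated {V : Type} (S : Finset (CondRule V)) (r : CondRule V) : Prop :=
  ∃ ω : V → Bool, verifies ω r ∧ ∀ r' ∈ S, ¬ falsifies ω r'

/-- `rest Δ j` is what remains of `Δ` after removing the first `j` parts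
`Δ^0, …, Δ^{j-1}` of the tolerance partition. -/
noncomputable def rest {V : Type} (Δ : Finset (CondRule V)) : ℕ → Finset (CondRule V)
  | 0 => Δ
  | j + 1 => (rest Δ j).filter (fun r => ¬ Tolerated (rest Δ j) r)

/-- `part Δ j` is the part `Δ^j` of the inclusion-maximal tolerance partition of `Δ`:
the conditionals of `rest Δ j` tolerated by `rest Δ j`. -/
noncomputable def part {V : Type} (Δ : Finset (CondRule V)) (j : ℕ) : Finset (CondRule V) :=
  (rest Δ j).filter (fun r => Tolerated (rest Δ j) r)

/-- `Δ` is consistent iff the tolerance partitioning process exhausts `Δ`. -/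
def Consistent {V : Type} (Δ : Finset (CondRule V)) : Prop :=
  ∃ n, rest Δ n = ∅

/-- The tolerance partition of `Δ` is `OP(Δ) = (Δ^0, …, Δ^k)`, i.e. the process
stops exactly after the part with index `k` (all parts `Δ^0, …, Δ^k` nonempty). -/
def IsOPLength {V : Type} (Δ : Finset (CondRule V)) (k : ℕ) : Prop :=
  rest Δ (k + 1) = ∅ ∧ rest Δ k ≠ ∅

/-- `fpart Δ j ω` = `f_Δ^j(ω)`, the set of conditionals of `Δ^j` falsified by `ω`. -/
noncomputable def fpart {V : Type} (Δ : Finset (CondRule V)) (j : ℕ) (ω : V → Bool) :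
    Finset (CondRule V) :=
  (part Δ j).filter (fun r => falsifies ω r)

/-- The preferred structure on worlds `ω ≺_Δ ω'`: there is `m` such that
`f_Δ^i(ω) = f_Δ^i(ω')` for all `i > m` and `f_Δ^m(ω) ⊊ f_Δ^m(ω')`.
(For `i` beyond the last index `k` of the tolerance partition of a consistent `Δ`,
both sides are empty, so this agrees with the textbook definition.) -/
noncomputable def prefRel {V : Type} (Δ : Finset (CondRule V)) (ω ω' : V → Bool) : Prop :=
  ∃ m : ℕ, (∀ i, m < i → fpart Δ i ω = fpart Δ i ω') ∧ fpart Δ m ω ⊂ fpart Δ m ω'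

/-- System W inference `A |~_Δ^w B`: for every world `ω' ⊨ A ∧ ¬B` there is a
world `ω ⊨ A ∧ B` with `ω ≺_Δ ω'`. -/
noncomputable def SysWInf {V : Type} (Δ : Finset (CondRule V)) (A B : PForm V) : Prop :=
  ∀ ω' : V → Bool, A.eval ω' = true ∧ B.eval ω' = false →
    ∃ ω : V → Bool, (A.eval ω = true ∧ B.eval ω = true) ∧ prefRel Δ ω ω'

/-- `Δ = Δ1 ∪_{Sig1,Sig2} Δ2`: `{Sig1, Sig2}` is a partition of the signature, `{Δ1, Δ2}`
partitions `Δ`, and every conditional of `Δi` uses only atoms from `Σi`. -/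
def SyntaxSplitting {V : Type} (Sig1 Sig2 : Set V) (Δ Δ1 Δ2 : Finset (CondRule V)) : Prop :=
  Sig1 ∪ Sig2 = Set.univ ∧ Disjoint Sig1 Sig2 ∧
  Δ = Δ1 ∪ Δ2 ∧ Disjoint Δ1 Δ2 ∧
  (∀ r ∈ Δ1, condVars r ⊆ Sig1) ∧ (∀ r ∈ Δ2, condVars r ⊆ Sig2)

end SysW

namespace SysW

variable {V : Type}

lemma eval_congr (ω ω' : V → Bool) (φ : PForm V) (h : ∀ v ∈ φ.vars, ω v = ω' v) :
    φ.eval ω = φ.eval ω' := by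
  induction φ with
  | var v => exact h v (by simp [PForm.vars])
  | tru => rfl
  | fls => rfl
  | neg φ ih => simp only [PForm.eval]; rw [ih h]
  | conj φ ψ ih1 ih2 =>
      simp only [PForm.eval]
      rw [ih1 (fun v hv => h v (by simp [PForm.vars]; exact Or.inl hv)),
        ih2 (fun v hv => h v (by simp [PForm.vars]; exact Or.inr hv))]
  | disj φ ψ ih1 ih2 =>
      simp only [PForm.eval]
      rw [ih1 (fun v hv => h v (by simp [PForm.vars]; exact Or.inl hv)),
        ih2 (fun v hv => h v (by simp [PForm.vars]; exact Or.inr hv))]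

lemma falsifies_congr (ω ω' : V → Bool) (r : CondRule V) (h : ∀ v ∈ condVars r, ω v = ω' v) :
    falsifies ω r ↔ falsifies ω' r := by
  unfold falsifies
  rw [eval_congr ω ω' r.ante (fun v hv => h v (Or.inl hv)),
    eval_congr ω ω' r.cons (fun v hv => h v (Or.inr hv))]

lemma verifies_congr (ω ω' : V → Bool) (r : CondRule V) (h : ∀ v ∈ condVars r, ω v = ω' v) :
    verifies ω r ↔ verifies ω' r := by
  unfold verifies
  rw [eval_congr ω ω' r.ante (fun v hv => h v (Or.inl hv)),
    eval_congr ω ω' r.cons (fun v hv => h v (Or.inr hv))]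

lemma tolerated_anti {S S' : Finset (CondRule V)} (h : S' ⊆ S) {r : CondRule V}
    (ht : Tolerated S r) : Tolerated S' r := by
  obtain ⟨ω, hv, hf⟩ := ht
  exact ⟨ω, hv, fun r' hr' => hf r' (h hr')⟩

lemma rest_succ_subset (Δ : Finset (CondRule V)) (j : ℕ) : rest Δ (j + 1) ⊆ rest Δ j :=
  Finset.filter_subset _ _

lemma rest_anti (Δ : Finset (CondRule V)) {i j : ℕ} (h : i ≤ j) : rest Δ j ⊆ rest Δ i := by
  induction j with
  | zero => simpa using (Nat.le_zero.mp h ▸ Finset.Subset.refl _)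
  | succ j ih =>
      rcases Nat.lt_or_ge i (j + 1) with h' | h'
      · exact (rest_succ_subset Δ j).trans (ih (Nat.lt_succ_iff.mp h'))
      · have : i = j + 1 := le_antisymm h h'
        subst this; exact Finset.Subset.refl _

lemma rest_subset (Δ : Finset (CondRule V)) (j : ℕ) : rest Δ j ⊆ Δ :=
  rest_anti Δ (Nat.zero_le j)

lemma rest_const (Δ : Finset (CondRule V)) {j : ℕ} (h : rest Δ (j + 1) = rest Δ j) :
    ∀ d, rest Δ (j + d) = rest Δ j := by
  intro d
  induction d with
  | zero => rfl
  | succ d ih =>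
      have : rest Δ (j + (d + 1)) = (rest Δ (j + d)).filter
          (fun r => ¬ Tolerated (rest Δ (j + d)) r) := rfl
      rw [this, ih]
      exact h

lemma exists_good (Δ : Finset (CondRule V)) (hcons : Consistent Δ) (j : ℕ) :
    ∃ ω : V → Bool, ∀ r ∈ rest Δ j, ¬ falsifies ω r := by
  obtain ⟨n, hn⟩ := hcons
  by_cases hne : rest Δ j = ∅
  · exact ⟨fun _ => true, fun r hr => absurd hr (by simp [hne])⟩
  · by_cases htol : ∃ r ∈ rest Δ j, Tolerated (rest Δ j) r
    · obtain ⟨r, _, ω, _, hf⟩ := htol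
      exact ⟨ω, hf⟩
    · exfalso
      push_neg at htol
      have heq : rest Δ (j + 1) = rest Δ j := by
        apply Finset.filter_true_of_mem
        intro r hr
        exact htol r hr
      have := rest_const Δ heq n
      have hsub : rest Δ (j + n) ⊆ rest Δ n := rest_anti Δ (Nat.le_add_left n j)
      rw [this] at hsub
      rw [hn] at hsub
      exact hne (Finset.subset_empty.mp hsub)

lemma tolerated_union {Sig1 Sig2 : Set V} (hu : Sig1 ∪ Sig2 = Set.univ)
    (hd : Disjoint Sig1 Sig2) (S1 S2 : Finset (CondRule V))
    (h1 : ∀ r ∈ S1, condVars r ⊆ Sig1) (h2 : ∀ r ∈ S2, condVars r ⊆ Sig2)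
    (r : CondRule V) (hr : condVars r ⊆ Sig1) (ht : Tolerated S1 r)
    (hω2 : ∃ ω2 : V → Bool, ∀ r' ∈ S2, ¬ falsifies ω2 r') : Tolerated (S1 ∪ S2) r := by
  obtain ⟨ω1, hv, hnf⟩ := ht
  obtain ⟨ω2, hnf2⟩ := hω2
  refine ⟨fun v => if v ∈ Sig1 then ω1 v else ω2 v, ?_, ?_⟩
  · rw [verifies_congr _ ω1 r (fun v hv' => by simp [hr hv'])]
    exact hv
  · intro r' hr'
    rcases Finset.mem_union.mp hr' with h | h
    · rw [falsifies_congr _ ω1 r' (fun v hv' => by simp [h1 r' h hv'])]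
      exact hnf r' h
    · rw [falsifies_congr _ ω2 r' (fun v hv' => by
        have hv2 : v ∈ Sig2 := h2 r' h hv'
        have : v ∉ Sig1 := fun hv1 => Set.disjoint_left.mp hd hv1 hv2
        simp [this])]
      exact hnf2 r' h

end SysW

open SysW in
/-- For a consistent belief base `Δ = Δ1 ∪_{Σ1,Σ2} Δ2` with syntax splitting,
tolerance partitions `OP(Δ) = (Δ^0,…,Δ^k)` and `OP(Δi) = (Δi^0,…,Δi^{l_i})` (i = 1,2),
we have `Δi^j = Δ^j ∩ Δi` (hence `Δi^j ⊆ Δ^j`) for all `j = 0,…,l_i`. -/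
theorem stmt0 {V : Type} [Fintype V] (Sig1 Sig2 : Set V) (Δ Δ1 Δ2 : Finset (CondRule V))
    (hsplit : SyntaxSplitting Sig1 Sig2 Δ Δ1 Δ2) (hcons : Consistent Δ)
    (k l1 l2 : ℕ) (hk : IsOPLength Δ k) (hl1 : IsOPLength Δ1 l1) (hl2 : IsOPLength Δ2 l2) :
    (∀ j ≤ l1, part Δ1 j = part Δ j ∩ Δ1 ∧ part Δ1 j ⊆ part Δ j) ∧
    (∀ j ≤ l2, part Δ2 j = part Δ j ∩ Δ2 ∧ part Δ2 j ⊆ part Δ j) := by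
  obtain ⟨hu, hd, hΔ, hdd, hv1, hv2⟩ := hsplit
  have hu' : Sig2 ∪ Sig1 = Set.univ := by rw [Set.union_comm]; exact hu
  have hd' : Disjoint Sig2 Sig1 := hd.symm
  have hv1' : ∀ j, ∀ r ∈ rest Δ1 j, condVars r ⊆ Sig1 :=
    fun j r hr => hv1 r (rest_subset Δ1 j hr)
  have hv2' : ∀ j, ∀ r ∈ rest Δ2 j, condVars r ⊆ Sig2 :=
    fun j r hr => hv2 r (rest_subset Δ2 j hr)
  -- the key tolerance equivalence, assuming the rest equality at level j
  have key : ∀ j, rest Δ j = rest Δ1 j ∪ rest Δ2 j →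
      (∀ r ∈ rest Δ1 j, (Tolerated (rest Δ j) r ↔ Tolerated (rest Δ1 j) r)) ∧
      (∀ r ∈ rest Δ2 j, (Tolerated (rest Δ j) r ↔ Tolerated (rest Δ2 j) r)) := by
    intro j ih
    obtain ⟨ω0, hω0⟩ := exists_good Δ hcons j
    have good1 : ∀ r ∈ rest Δ1 j, ¬ falsifies ω0 r := by
      intro r hr; exact hω0 r (by rw [ih]; exact Finset.mem_union_left _ hr)
    have good2 : ∀ r ∈ rest Δ2 j, ¬ falsifies ω0 r := by
      intro r hr; exact hω0 r (by rw [ih]; exact Finset.mem_union_right _ hr)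
    constructor
    · intro r hr
      constructor
      · intro h
        exact tolerated_anti (by rw [ih]; exact Finset.subset_union_left) h
      · intro h
        rw [ih]
        exact tolerated_union hu hd _ _ (hv1' j) (hv2' j) r (hv1' j r hr) h ⟨ω0, good2⟩
    · intro r hr
      constructor
      · intro h
        exact tolerated_anti (by rw [ih]; exact Finset.subset_union_right) h
      · intro h
        rw [ih, Finset.union_comm]
        exact tolerated_union hu' hd' _ _ (hv2' j) (hv1' j) r (hv2' j r hr) h ⟨ω0, good1⟩
  have main : ∀ j, rest Δ j = rest Δ1 j ∪ rest Δ2 j := by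
    intro j
    induction j with
    | zero => exact hΔ
    | succ j ih =>
        obtain ⟨key1, key2⟩ := key j ih
        have h1 : (rest Δ1 j).filter (fun r => ¬ Tolerated (rest Δ j) r) = rest Δ1 (j + 1) := by
          show _ = (rest Δ1 j).filter (fun r => ¬ Tolerated (rest Δ1 j) r)
          apply Finset.filter_congr
          intro r hr
          exact not_congr (key1 r hr)
        have h2 : (rest Δ2 j).filter (fun r => ¬ Tolerated (rest Δ j) r) = rest Δ2 (j + 1) := by
          show _ = (rest Δ2 j).filter (fun r => ¬ Tolerated (rest Δ2 j) r)
          apply Finset.filter_congr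
          intro r hr
          exact not_congr (key2 r hr)
        show (rest Δ j).filter (fun r => ¬ Tolerated (rest Δ j) r) = _
        rw [ih] at h1 h2
        rw [ih, Finset.filter_union, h1, h2]
  have final1 : ∀ j, part Δ1 j = part Δ j ∩ Δ1 := by
    intro j
    obtain ⟨key1, _⟩ := key j (main j)
    ext r
    simp only [part, Finset.mem_inter, Finset.mem_filter]
    constructor
    · rintro ⟨hr, ht⟩
      have hrΔ : r ∈ rest Δ j := by rw [main j]; exact Finset.mem_union_left _ hr
      exact ⟨⟨hrΔ, (key1 r hr).mpr ht⟩, rest_subset Δ1 j hr⟩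
    · rintro ⟨⟨hrΔ, ht⟩, hr1⟩
      have hr : r ∈ rest Δ1 j := by
        rw [main j] at hrΔ
        rcases Finset.mem_union.mp hrΔ with h | h
        · exact h
        · exact absurd hr1 (Finset.disjoint_right.mp hdd (rest_subset Δ2 j h))
      exact ⟨hr, (key1 r hr).mp ht⟩
  have final2 : ∀ j, part Δ2 j = part Δ j ∩ Δ2 := by
    intro j
    obtain ⟨_, key2⟩ := key j (main j)
    ext r
    simp only [part, Finset.mem_inter, Finset.mem_filter]
    constructor
    · rintro ⟨hr, ht⟩
      have hrΔ : r ∈ rest Δ j := by rw [main j]; exact Finset.mem_union_right _ hr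
      exact ⟨⟨hrΔ, (key2 r hr).mpr ht⟩, rest_subset Δ2 j hr⟩
    · rintro ⟨⟨hrΔ, ht⟩, hr2⟩
      have hr : r ∈ rest Δ2 j := by
        rw [main j] at hrΔ
        rcases Finset.mem_union.mp hrΔ with h | h
        · exact absurd hr2 (Finset.disjoint_left.mp hdd (rest_subset Δ1 j h))
        · exact h
      exact ⟨hr, (key2 r hr).mp ht⟩
  exact ⟨fun j _ => ⟨final1 j, (final1 j) ▸ Finset.inter_subset_left⟩,
    fun j _ => ⟨final2 j, (final2 j) ▸ Finset.inter_subset_left⟩⟩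
end

section
/- Let Δ = Δ1 ∪_{Σ1,Σ2} Δ2 be a consistent belief base with syntax splitting, let OP(Δ) = (Δ^0,…,Δ^k) be the inclusion-maximal tolerance partition of Δ, and let OP(Δ_i) = (Δ_i^0,…,Δ_i^{l_i}) be the inclusion-maximal tolerance partition of Δ_i for i = 1,2. Then max{l_1, l_2} = k. -/
open scoped Classical

namespace SysWAux

open SysW

variable {V : Type}

lemma eval_congr (ω ω' : V → Bool) (φ : PForm V)
    (h : ∀ v ∈ φ.vars, ω v = ω' v) : φ.eval ω = φ.eval ω' := by
  induction φ with
  | var v => exact h v (by simp [PForm.vars])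
  | tru => rfl
  | fls => rfl
  | neg φ ih => simp only [PForm.eval]; rw [ih h]
  | conj φ ψ ih1 ih2 =>
      simp only [PForm.eval]
      rw [ih1 (fun v hv => h v (Set.mem_union_left _ hv)),
          ih2 (fun v hv => h v (Set.mem_union_right _ hv))]
  | disj φ ψ ih1 ih2 =>
      simp only [PForm.eval]
      rw [ih1 (fun v hv => h v (Set.mem_union_left _ hv)),
          ih2 (fun v hv => h v (Set.mem_union_right _ hv))]

lemma falsifies_congr (ω ω' : V → Bool) (r : CondRule V)
    (h : ∀ v ∈ condVars r, ω v = ω' v) : falsifies ω r ↔ falsifies ω' r := by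
  unfold falsifies
  rw [eval_congr ω ω' r.ante (fun v hv => h v (Set.mem_union_left _ hv)),
      eval_congr ω ω' r.cons (fun v hv => h v (Set.mem_union_right _ hv))]

lemma verifies_congr (ω ω' : V → Bool) (r : CondRule V)
    (h : ∀ v ∈ condVars r, ω v = ω' v) : verifies ω r ↔ verifies ω' r := by
  unfold verifies
  rw [eval_congr ω ω' r.ante (fun v hv => h v (Set.mem_union_left _ hv)),
      eval_congr ω ω' r.cons (fun v hv => h v (Set.mem_union_right _ hv))]

lemma rest_subset (Δ : Finset (CondRule V)) : ∀ j, rest Δ j ⊆ Δ := by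
  intro j
  induction j with
  | zero => exact subset_rfl
  | succ j ih => exact (Finset.filter_subset _ _).trans ih

lemma rest_empty_succ (Δ : Finset (CondRule V)) {n : ℕ} (h : rest Δ n = ∅) :
    rest Δ (n + 1) = ∅ := by
  simp only [rest, h, Finset.filter_empty]

lemma rest_empty_mono (Δ : Finset (CondRule V)) {n m : ℕ} (h : rest Δ n = ∅)
    (hnm : n ≤ m) : rest Δ m = ∅ := by
  induction m, hnm using Nat.le_induction with
  | base => exact h
  | succ m _ ih => exact rest_empty_succ Δ ih

lemma exists_nofalsify (Δ : Finset (CondRule V)) (h : Consistent Δ) :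
    ∃ ω : V → Bool, ∀ r ∈ Δ, ¬ falsifies ω r := by
  by_contra hc
  push_neg at hc
  have hall : ∀ n, rest Δ n = Δ := by
    intro n
    induction n with
    | zero => rfl
    | succ n ih =>
      show (rest Δ n).filter (fun r => ¬ Tolerated (rest Δ n) r) = Δ
      rw [ih]
      apply Finset.filter_true_of_mem
      intro r _ ht
      obtain ⟨ω, _, hf⟩ := ht
      obtain ⟨r', hr', hfr'⟩ := hc ω
      exact hf r' hr' hfr'
  obtain ⟨n, hn⟩ := h
  rw [hall n] at hn
  obtain ⟨r, hr, _⟩ := hc (fun _ => true)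
  rw [hn] at hr
  exact absurd hr (Finset.notMem_empty r)

lemma tolerated_union_left (Sig1 Sig2 : Set V) (hdis : Disjoint Sig1 Sig2)
    (Δ1 Δ2 S1 S2 : Finset (CondRule V))
    (h1 : ∀ r ∈ Δ1, condVars r ⊆ Sig1) (h2 : ∀ r ∈ Δ2, condVars r ⊆ Sig2)
    (hS1 : S1 ⊆ Δ1) (hS2 : S2 ⊆ Δ2) (hcons2 : Consistent Δ2)
    (r : CondRule V) (hr : r ∈ Δ1) :
    Tolerated (S1 ∪ S2) r ↔ Tolerated S1 r := by
  constructor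
  · rintro ⟨ω, hv, hf⟩
    exact ⟨ω, hv, fun r' hr' => hf r' (Finset.mem_union_left _ hr')⟩
  · rintro ⟨ω1, hv, hf⟩
    obtain ⟨ω2, hω2⟩ := exists_nofalsify Δ2 hcons2
    set ω : V → Bool := fun v => if v ∈ Sig1 then ω1 v else ω2 v with hω
    have hag1 : ∀ r' ∈ Δ1, ∀ v ∈ condVars r', ω v = ω1 v := by
      intro r' hr' v hv'
      simp only [hω, if_pos (h1 r' hr' hv')]
    have hag2 : ∀ r' ∈ Δ2, ∀ v ∈ condVars r', ω v = ω2 v := by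
      intro r' hr' v hv'
      have : v ∉ Sig1 := Set.disjoint_right.mp hdis (h2 r' hr' hv')
      simp only [hω, if_neg this]
    refine ⟨ω, (verifies_congr ω ω1 r (hag1 r hr)).mpr hv, ?_⟩
    intro r' hr'
    rcases Finset.mem_union.mp hr' with hh | hh
    · rw [falsifies_congr ω ω1 r' (hag1 r' (hS1 hh))]
      exact hf r' hh
    · rw [falsifies_congr ω ω2 r' (hag2 r' (hS2 hh))]
      exact hω2 r' (hS2 hh)

lemma rest_union (Sig1 Sig2 : Set V) (hdis : Disjoint Sig1 Sig2)
    (Δ1 Δ2 : Finset (CondRule V))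
    (h1 : ∀ r ∈ Δ1, condVars r ⊆ Sig1) (h2 : ∀ r ∈ Δ2, condVars r ⊆ Sig2)
    (hc1 : Consistent Δ1) (hc2 : Consistent Δ2) :
    ∀ j, rest (Δ1 ∪ Δ2) j = rest Δ1 j ∪ rest Δ2 j := by
  intro j
  induction j with
  | zero => rfl
  | succ j ih =>
    have s1 : rest Δ1 j ⊆ Δ1 := rest_subset Δ1 j
    have s2 : rest Δ2 j ⊆ Δ2 := rest_subset Δ2 j
    show (rest (Δ1 ∪ Δ2) j).filter (fun r => ¬ Tolerated (rest (Δ1 ∪ Δ2) j) r) = _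
    rw [ih, Finset.filter_union]
    congr 1
    · apply Finset.filter_congr
      intro r hr
      exact not_congr (tolerated_union_left Sig1 Sig2 hdis Δ1 Δ2 _ _ h1 h2 s1 s2 hc2 r (s1 hr))
    · apply Finset.filter_congr
      intro r hr
      rw [Finset.union_comm]
      exact not_congr (tolerated_union_left Sig2 Sig1 hdis.symm Δ2 Δ1 _ _ h2 h1 s2 s1 hc1 r (s2 hr))

lemma isOP_unique (Δ : Finset (CondRule V)) {k m : ℕ}
    (hk : IsOPLength Δ k) (hm : IsOPLength Δ m) : k = m := by
  rcases lt_trichotomy k m with h | h | h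
  · exact absurd (rest_empty_mono Δ hk.1 h) hm.2
  · exact h
  · exact absurd (rest_empty_mono Δ hm.1 h) hk.2

end SysWAux

open SysW in
/-- For a consistent belief base `Δ = Δ1 ∪_{Σ1,Σ2} Δ2` with syntax splitting,
tolerance partitions `OP(Δ) = (Δ^0,…,Δ^k)` and `OP(Δi) = (Δi^0,…,Δi^{l_i})` (i = 1,2),
we have `max {l1, l2} = k`. -/
theorem stmt1 {V : Type} [Fintype V] (Sig1 Sig2 : Set V) (Δ Δ1 Δ2 : Finset (CondRule V))
    (hsplit : SyntaxSplitting Sig1 Sig2 Δ Δ1 Δ2) (hcons : Consistent Δ)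
    (k l1 l2 : ℕ) (hk : IsOPLength Δ k) (hl1 : IsOPLength Δ1 l1) (hl2 : IsOPLength Δ2 l2) :
    max l1 l2 = k := by
  obtain ⟨hU, hdis, hΔ, hdisΔ, h1, h2⟩ := hsplit
  have hc1 : Consistent Δ1 := ⟨l1 + 1, hl1.1⟩
  have hc2 : Consistent Δ2 := ⟨l2 + 1, hl2.1⟩
  have hru := SysWAux.rest_union Sig1 Sig2 hdis Δ1 Δ2 h1 h2 hc1 hc2
  have hmax : IsOPLength Δ (max l1 l2) := by
    constructor
    · rw [hΔ, hru, SysWAux.rest_empty_mono Δ1 hl1.1 (by omega),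
        SysWAux.rest_empty_mono Δ2 hl2.1 (by omega)]
      simp
    · rw [hΔ, hru]
      rcases max_cases l1 l2 with ⟨he, _⟩ | ⟨he, _⟩
      · rw [he]
        intro h
        exact hl1.2 (Finset.union_eq_empty.mp h).1
      · rw [he]
        intro h
        exact hl2.2 (Finset.union_eq_empty.mp h).2
  exact SysWAux.isOP_unique Δ hmax hk
end

section
/- For any consistent belief base Δ, the preferred structure on worlds ≺_Δ is a strict partial order on Ω_Σ, i.e., ≺_Δ is irreflexive and transitive. -/
open scoped Classical

open SysW in
/-- For any consistent belief base `Δ`, the preferred structure `≺_Δ`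
is a strict partial order on worlds: irreflexive and transitive. -/
theorem stmt9 {V : Type} [Fintype V] (Δ : Finset (CondRule V)) (hcons : Consistent Δ) :
    (∀ ω : V → Bool, ¬ prefRel Δ ω ω) ∧
    (∀ ω1 ω2 ω3 : V → Bool, prefRel Δ ω1 ω2 → prefRel Δ ω2 ω3 → prefRel Δ ω1 ω3) := by
  constructor
  · rintro ω ⟨m, -, hss⟩
    exact hss.2 hss.1
  · rintro ω1 ω2 ω3 ⟨m1, h1, s1⟩ ⟨m2, h2, s2⟩
    rcases lt_trichotomy m1 m2 with h | h | h
    · refine ⟨m2, fun i hi => (h1 i (h.trans hi)).trans (h2 i hi), ?_⟩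
      rw [h1 m2 h]; exact s2
    · subst h
      exact ⟨m1, fun i hi => (h1 i hi).trans (h2 i hi), s1.trans s2⟩
    · refine ⟨m1, fun i hi => (h1 i hi).trans (h2 i (h.trans hi)), ?_⟩
      rw [← h2 m1 h]; exact s1
end

section
/- Let Δ = Δ1 ∪_{Σ1,Σ2} Δ2 be a consistent belief base with syntax splitting. For every world ω' ∈ Ω_Σ there exists a world ω_min ∈ Ω_Σ such that (1) ω_min ≺_Δ ω' or ω_min = ω', (2) ω_min|_{Σ1} = ω'|_{Σ1}, and (3) there is no world ω'' with ω'' ≺_Δ ω_min satisfying ω''|_{Σ1} = ω'|_{Σ1} and (ω'' ≺_Δ ω' or ω'' = ω'). -/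
open scoped Classical

open SysW in
lemma prefRel_trans' {V : Type} (Δ : Finset (CondRule V)) :
    ∀ a b c, prefRel Δ a b → prefRel Δ b c → prefRel Δ a c := by
  rintro a b c ⟨m1, h1, s1⟩ ⟨m2, h2, s2⟩
  rcases lt_trichotomy m1 m2 with h | h | h
  · exact ⟨m2, fun i hi => (h1 i (h.trans hi)).trans (h2 i hi),
      by rw [h1 m2 h]; exact s2⟩
  · subst h
    exact ⟨m1, fun i hi => (h1 i hi).trans (h2 i hi), s1.trans s2⟩
  · exact ⟨m1, fun i hi => (h1 i hi).trans (h2 i (h.trans hi)),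
      by rw [← h2 m1 h]; exact s1⟩

open SysW in
/-- For a consistent belief base `Δ = Δ1 ∪_{Σ1,Σ2} Δ2` with syntax splitting,
for every world `ω'` there is a world `ωmin` with (1) `ωmin ≺_Δ ω'` or `ωmin = ω'`,
(2) `ωmin|_{Σ1} = ω'|_{Σ1}`, and (3) no world `ω''` with `ω'' ≺_Δ ωmin` satisfies
(1) and (2). -/
theorem stmt12 {V : Type} [Fintype V] (Sig1 Sig2 : Set V) (Δ Δ1 Δ2 : Finset (CondRule V))
    (hsplit : SyntaxSplitting Sig1 Sig2 Δ Δ1 Δ2) (hcons : Consistent Δ)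
    (ω' : V → Bool) :
    ∃ ωmin : V → Bool,
      (prefRel Δ ωmin ω' ∨ ωmin = ω') ∧
      (∀ v ∈ Sig1, ωmin v = ω' v) ∧
      ¬ ∃ ω'' : V → Bool, prefRel Δ ω'' ωmin ∧
        (∀ v ∈ Sig1, ω'' v = ω' v) ∧ (prefRel Δ ω'' ω' ∨ ω'' = ω') := by
  classical
  have hirr : ∀ a, ¬ prefRel Δ a a := by
    rintro a ⟨m, _, ss⟩
    exact ssubset_irrefl _ ss
  haveI : IsTrans (V → Bool) (prefRel Δ) := ⟨prefRel_trans' Δ⟩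
  haveI : IsIrrefl (V → Bool) (prefRel Δ) := ⟨hirr⟩
  have hwf : WellFounded (prefRel Δ) :=
    Finite.wellFounded_of_trans_of_irrefl (prefRel Δ)
  set S : Set (V → Bool) :=
    {ω | (prefRel Δ ω ω' ∨ ω = ω') ∧ ∀ v ∈ Sig1, ω v = ω' v} with hS
  have hne : ω' ∈ S := ⟨Or.inr rfl, fun v _ => rfl⟩
  obtain ⟨ωmin, hmem, hmin⟩ := hwf.has_min S ⟨ω', hne⟩
  refine ⟨ωmin, hmem.1, hmem.2, ?_⟩
  rintro ⟨ω'', h1, h2, h3⟩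
  exact hmin ω'' ⟨h3, h2⟩ h1
end
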